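/- Let X₁ and X₂ be finite sets and let (ρ_{x₁,x₂})_{(x₁,x₂)∈X₁×X₂} be a hybrid state over X₁ × X₂ and ℂⁿ whose quantum marginal ρ_B = Σ_{x₁,x₂} ρ_{x₁,x₂} is positive definite. Define the statistics R₁(x₁) = ρ_{B|X₁=x₁} and R₂(x₂) = ρ_{B|X₂=x₂} on the supports of the classical marginals, and for values a, b define M_{a,b} = Σ_{x₁: R₁(x₁)=a} Σ_{x₂: R₂(x₂)=b} ρ_{x₁,x₂}, M_a = Σ_{x₁: R₁(x₁)=a} Σ_{x₂} ρ_{x₁,x₂}, and N_b = Σ_{x₁} Σ_{x₂: R₂(x₂)=b} ρ_{x₁,x₂}. Assume that for all values a, b: ρ_B^{-1/2} M_{a,b} ρ_B^{-1/2} = (ρ_B^{-1/2} M_a ρ_B^{-1/2}) · (ρ_B^{-1/2} N_b ρ_B^{-1/2}). Then for any observed x₁, x₂ with tr(M_{σ₁,σ₂}) ≠ 0, where σ₁ = R₁(x₁) and σ₂ = R₂(x₂), the supra-Bayesian pooled state satisfies M_{σ₁,σ₂} / tr(M_{σ₁,σ₂}) = σ₁ · ρ_B^{-1} · σ₂ /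 tr(σ₁ · ρ_B^{-1} · σ₂). -/

import Mathlib

open scoped BigOperators ComplexOrder

noncomputable section

/-- The positive semidefinite square root of a positive semidefinite matrix, as
`Matrix.PosSemidef.sqrt` was defined in the older Mathlib (since removed). -/
noncomputable def Matrix.PosSemidef.sqrt {d : Type*} [Fintype d] [DecidableEq d]
    {M : Matrix d d ℂ} (hA : M.PosSemidef) : Matrix d d ℂ :=
  hA.1.eigenvectorUnitary.1 * Matrix.diagonal ((↑) ∘ (√·) ∘ hA.1.eigenvalues) *
  (star hA.1.eigenvectorUnitary : Matrix d d ℂ)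

lemma Matrix.PosSemidef.sqrt_mul_self {d : Type*} [Fintype d] [DecidableEq d]
    {M : Matrix d d ℂ} (hA : M.PosSemidef) : hA.sqrt * hA.sqrt = M := by
  have hU : (star hA.1.eigenvectorUnitary : Matrix d d ℂ) * hA.1.eigenvectorUnitary.1 = 1 :=
    Unitary.coe_star_mul_self _
  have hD : Matrix.diagonal ((↑) ∘ (√·) ∘ hA.1.eigenvalues : d → ℂ) *
      Matrix.diagonal ((↑) ∘ (√·) ∘ hA.1.eigenvalues) =
      Matrix.diagonal (RCLike.ofReal ∘ hA.1.eigenvalues) := by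
    rw [Matrix.diagonal_mul_diagonal]
    congr 1; funext i
    simp only [Function.comp_apply]
    rw [← Complex.ofReal_mul, Real.mul_self_sqrt (hA.eigenvalues_nonneg i)]
    rfl
  conv_rhs => rw [hA.1.spectral_theorem, Unitary.conjStarAlgAut_apply]
  rw [Matrix.PosSemidef.sqrt]
  calc _ = hA.1.eigenvectorUnitary.1 * Matrix.diagonal ((↑) ∘ (√·) ∘ hA.1.eigenvalues) *
      ((star hA.1.eigenvectorUnitary : Matrix d d ℂ) * hA.1.eigenvectorUnitary.1) *
      Matrix.diagonal ((↑) ∘ (√·) ∘ hA.1.eigenvalues) *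
      (star hA.1.eigenvectorUnitary : Matrix d d ℂ) := by simp only [mul_assoc]
    _ = _ := by rw [hU, mul_one, mul_assoc _ (Matrix.diagonal _) (Matrix.diagonal _), hD]

lemma Matrix.PosSemidef.posSemidef_sqrt {d : Type*} [Fintype d] [DecidableEq d]
    {M : Matrix d d ℂ} (hA : M.PosSemidef) : hA.sqrt.PosSemidef := by
  rw [Matrix.PosSemidef.sqrt, Matrix.star_eq_conjTranspose]
  apply Matrix.PosSemidef.mul_mul_conjTranspose_same
  rw [Matrix.posSemidef_diagonal_iff]
  intro i
  simp only [Function.comp_apply]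
  exact_mod_cast Real.sqrt_nonneg _

/-- A positive semidefinite complex matrix with zero trace is zero. -/
lemma psd_trace_zero {n : ℕ} {M : Matrix (Fin n) (Fin n) ℂ}
    (hM : M.PosSemidef) (h : M.trace = 0) : M = 0 := by
  have hs : hM.sqrt * hM.sqrt = M := hM.sqrt_mul_self
  have hH : Matrix.conjTranspose hM.sqrt = hM.sqrt := hM.posSemidef_sqrt.1
  have hz : Matrix.conjTranspose hM.sqrt * hM.sqrt = 0 → hM.sqrt = 0 := Matrix.conjTranspose_mul_self_eq_zero.mp
  set A := hM.sqrt with hA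
  have htr : (Matrix.conjTranspose A * A).trace = 0 := by rw [hH, hs, h]
  have hre : ∑ j, ∑ i, Complex.normSq (A i j) = 0 := by
    have : (Matrix.conjTranspose A * A).trace = ((∑ j, ∑ i, Complex.normSq (A i j) : ℝ) : ℂ) := by
      simp only [Matrix.trace, Matrix.diag, Matrix.mul_apply, Matrix.conjTranspose_apply]
      push_cast
      congr 1; funext j; congr 1; funext i
      rw [Complex.normSq_eq_conj_mul_self]; rfl
    rw [this] at htr
    exact_mod_cast htr
  have hzero : ∀ i j, A i j = 0 := by
    intro i j
    have h1 : ∀ j ∈ Finset.univ, (0:ℝ) ≤ ∑ i, Complex.normSq (A i j) := by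
      intro j _; exact Finset.sum_nonneg fun i _ => Complex.normSq_nonneg _
    have h2 := (Finset.sum_eq_zero_iff_of_nonneg h1).mp hre j (Finset.mem_univ j)
    have h3 := (Finset.sum_eq_zero_iff_of_nonneg
      (fun i _ => Complex.normSq_nonneg (A i j))).mp h2 i (Finset.mem_univ i)
    exact Complex.normSq_eq_zero.mp h3
  have : A = 0 := by ext i j; exact hzero i j
  rw [← hs, this, Matrix.mul_zero]

open Classical in
/-- The inverse positive square root `M^{-1/2}` of a matrix (defined to be `0` if `M` is
not positive semidefinite). -/
def invSqrt {d : Type*} [Fintype d] [DecidableEq d] (M : Matrix d d ℂ) :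
    Matrix d d ℂ :=
  if h : M.PosSemidef then h.sqrt⁻¹ else 0

open Classical

/-- The quantum marginal `ρ_B = Σ_{x₁,x₂} ρ_{x₁,x₂}` of a hybrid state. -/
def qB {X₁ X₂ : Type*} [Fintype X₁] [Fintype X₂] {n : ℕ}
    (ρ : X₁ → X₂ → Matrix (Fin n) (Fin n) ℂ) : Matrix (Fin n) (Fin n) ℂ :=
  ∑ x₁, ∑ x₂, ρ x₁ x₂

/-- The unnormalized marginal `Σ_{x₂} ρ_{x₁,x₂}` corresponding to `X₁ = x₁`. -/
def qmarg₁ {X₁ X₂ : Type*} [Fintype X₂] {n : ℕ}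
    (ρ : X₁ → X₂ → Matrix (Fin n) (Fin n) ℂ) (x₁ : X₁) : Matrix (Fin n) (Fin n) ℂ :=
  ∑ x₂, ρ x₁ x₂

/-- The unnormalized marginal `Σ_{x₁} ρ_{x₁,x₂}` corresponding to `X₂ = x₂`. -/
def qmarg₂ {X₁ X₂ : Type*} [Fintype X₁] {n : ℕ}
    (ρ : X₁ → X₂ → Matrix (Fin n) (Fin n) ℂ) (x₂ : X₂) : Matrix (Fin n) (Fin n) ℂ :=
  ∑ x₁, ρ x₁ x₂

/-- The statistic `R₁(x₁) = ρ_{B|X₁=x₁}`. -/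
def qR₁ {X₁ X₂ : Type*} [Fintype X₂] {n : ℕ}
    (ρ : X₁ → X₂ → Matrix (Fin n) (Fin n) ℂ) (x₁ : X₁) : Matrix (Fin n) (Fin n) ℂ :=
  ((qmarg₁ ρ x₁).trace)⁻¹ • qmarg₁ ρ x₁

/-- The statistic `R₂(x₂) = ρ_{B|X₂=x₂}`. -/
def qR₂ {X₁ X₂ : Type*} [Fintype X₁] {n : ℕ}
    (ρ : X₁ → X₂ → Matrix (Fin n) (Fin n) ℂ) (x₂ : X₂) : Matrix (Fin n) (Fin n) ℂ :=
  ((qmarg₂ ρ x₂).trace)⁻¹ • qmarg₂ ρ x₂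

/-- `M_{a,b} = Σ_{x₁ : R₁(x₁)=a} Σ_{x₂ : R₂(x₂)=b} ρ_{x₁,x₂}`. -/
def Mab {X₁ X₂ : Type*} [Fintype X₁] [Fintype X₂] {n : ℕ}
    (ρ : X₁ → X₂ → Matrix (Fin n) (Fin n) ℂ) (a b : Matrix (Fin n) (Fin n) ℂ) :
    Matrix (Fin n) (Fin n) ℂ :=
  ∑ x₁, ∑ x₂, if qR₁ ρ x₁ = a ∧ qR₂ ρ x₂ = b then ρ x₁ x₂ else 0

/-- `M_a = Σ_{x₁ : R₁(x₁)=a} Σ_{x₂} ρ_{x₁,x₂}`. -/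
def Ma {X₁ X₂ : Type*} [Fintype X₁] [Fintype X₂] {n : ℕ}
    (ρ : X₁ → X₂ → Matrix (Fin n) (Fin n) ℂ) (a : Matrix (Fin n) (Fin n) ℂ) :
    Matrix (Fin n) (Fin n) ℂ :=
  ∑ x₁, if qR₁ ρ x₁ = a then qmarg₁ ρ x₁ else 0

/-- `N_b = Σ_{x₁} Σ_{x₂ : R₂(x₂)=b} ρ_{x₁,x₂}`. -/
def Nb {X₁ X₂ : Type*} [Fintype X₁] [Fintype X₂] {n : ℕ}
    (ρ : X₁ → X₂ → Matrix (Fin n) (Fin n) ℂ) (b : Matrix (Fin n) (Fin n) ℂ) :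
    Matrix (Fin n) (Fin n) ℂ :=
  ∑ x₂, if qR₂ ρ x₂ = b then qmarg₂ ρ x₂ else 0

/-- (Quantum supra-Bayesian pooling, shared priors.)
If the likelihood operators of the minimal sufficient statistics factorize,
`ρ_B^{-1/2} M_{a,b} ρ_B^{-1/2} = (ρ_B^{-1/2} M_a ρ_B^{-1/2})(ρ_B^{-1/2} N_b ρ_B^{-1/2})`
for all `a`, `b`, then for observed `x₁`, `x₂` the supra-Bayesian pooled state is the
quantum generalized multiplicative pool of Spekkens and Wiseman:
`σ^(supra) = c σ₁ ρ_B^{-1} σ₂`. -/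
theorem quantum_multiplicative_pooling
    {X₁ X₂ : Type*} [Fintype X₁] [Fintype X₂] {n : ℕ}
    (ρ : X₁ → X₂ → Matrix (Fin n) (Fin n) ℂ)
    (hpsd : ∀ x₁ x₂, (ρ x₁ x₂).PosSemidef)
    (hnorm : ∑ x₁, ∑ x₂, (ρ x₁ x₂).trace = 1)
    (hB : (qB ρ).PosDef)
    (hfact : ∀ a b : Matrix (Fin n) (Fin n) ℂ,
      invSqrt (qB ρ) * Mab ρ a b * invSqrt (qB ρ)
        = (invSqrt (qB ρ) * Ma ρ a * invSqrt (qB ρ))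
          * (invSqrt (qB ρ) * Nb ρ b * invSqrt (qB ρ)))
    (x₁ : X₁) (x₂ : X₂)
    (hobs : (Mab ρ (qR₁ ρ x₁) (qR₂ ρ x₂)).trace ≠ 0) :
    ((Mab ρ (qR₁ ρ x₁) (qR₂ ρ x₂)).trace)⁻¹ • Mab ρ (qR₁ ρ x₁) (qR₂ ρ x₂)
      = ((qR₁ ρ x₁ * (qB ρ)⁻¹ * qR₂ ρ x₂).trace)⁻¹
          • (qR₁ ρ x₁ * (qB ρ)⁻¹ * qR₂ ρ x₂) := by
  set Q := qB ρ with hQdef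
  have hQ : Q.PosSemidef := hB.posSemidef
  set sq := hQ.sqrt with hsqdef
  set S := sq⁻¹ with hSdef
  -- invertibility of sq
  have hdet : IsUnit sq.det := by
    have h2 : sq * sq = Q := hQ.sqrt_mul_self
    have : sq.det * sq.det = Q.det := by rw [← Matrix.det_mul, h2]
    have hQdet : IsUnit Q.det := hB.isUnit.map Matrix.detMonoidHom
    exact isUnit_of_mul_isUnit_left (this ▸ hQdet)
  have h1 : sq * S = 1 := Matrix.mul_nonsing_inv _ hdet
  have h2 : S * sq = 1 := Matrix.nonsing_inv_mul _ hdet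
  have hSS : S * S = Q⁻¹ := by
    rw [hSdef, ← Matrix.mul_inv_rev, hQ.sqrt_mul_self]
  have hSrw : invSqrt Q = S := by
    rw [invSqrt, dif_pos hQ]
  set a := qR₁ ρ x₁ with hadef
  set b := qR₂ ρ x₂ with hbdef
  -- key factorization
  have key : Mab ρ a b = Ma ρ a * Q⁻¹ * Nb ρ b := by
    have h := hfact a b
    rw [hSrw] at h
    calc Mab ρ a b
        = (sq * S) * Mab ρ a b * (S * sq) := by rw [h1, h2, one_mul, mul_one]
      _ = sq * (S * Mab ρ a b * S) * sq := by simp only [mul_assoc]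
      _ = sq * ((S * Ma ρ a * S) * (S * Nb ρ b * S)) * sq := by rw [h]
      _ = (sq * S) * Ma ρ a * ((S * S) * (Nb ρ b * (S * sq))) := by
          simp only [mul_assoc]
      _ = Ma ρ a * (Q⁻¹ * Nb ρ b) := by rw [h1, h2, hSS, one_mul, mul_one]
      _ = Ma ρ a * Q⁻¹ * Nb ρ b := by rw [mul_assoc]
  -- marginals are PSD
  have hpsd₁ : ∀ y, (qmarg₁ ρ y).PosSemidef := fun y =>
    Finset.sum_induction _ _ (fun A B hA hB => hA.add hB) Matrix.PosSemidef.zero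
      (fun x _ => hpsd y x)
  have hpsd₂ : ∀ y, (qmarg₂ ρ y).PosSemidef := fun y =>
    Finset.sum_induction _ _ (fun A B hA hB => hA.add hB) Matrix.PosSemidef.zero
      (fun x _ => hpsd x y)
  -- Ma = t₁ • a
  have hm₁ : ∀ y, qR₁ ρ y = a → qmarg₁ ρ y = (qmarg₁ ρ y).trace • a := by
    intro y hy
    by_cases h0 : (qmarg₁ ρ y).trace = 0
    · rw [h0, zero_smul]; exact psd_trace_zero (hpsd₁ y) h0
    · rw [← hy, qR₁, smul_smul, mul_inv_cancel₀ h0, one_smul]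
  have hm₂ : ∀ y, qR₂ ρ y = b → qmarg₂ ρ y = (qmarg₂ ρ y).trace • b := by
    intro y hy
    by_cases h0 : (qmarg₂ ρ y).trace = 0
    · rw [h0, zero_smul]; exact psd_trace_zero (hpsd₂ y) h0
    · rw [← hy, qR₂, smul_smul, mul_inv_cancel₀ h0, one_smul]
  set t₁ : ℂ := ∑ y, if qR₁ ρ y = a then (qmarg₁ ρ y).trace else 0 with ht₁
  set t₂ : ℂ := ∑ y, if qR₂ ρ y = b then (qmarg₂ ρ y).trace else 0 with ht₂
  have hMa : Ma ρ a = t₁ • a := by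
    rw [Ma, ht₁, Finset.sum_smul]
    refine Finset.sum_congr rfl fun y _ => ?_
    split_ifs with hy
    · exact hm₁ y hy
    · rw [zero_smul]
  have hNb : Nb ρ b = t₂ • b := by
    rw [Nb, ht₂, Finset.sum_smul]
    refine Finset.sum_congr rfl fun y _ => ?_
    split_ifs with hy
    · exact hm₂ y hy
    · rw [zero_smul]
  set σ := a * Q⁻¹ * b with hσ
  have key2 : Mab ρ a b = (t₁ * t₂) • σ := by
    rw [key, hMa, hNb, Matrix.smul_mul, Matrix.smul_mul, Matrix.mul_smul,
      smul_smul, hσ]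
  have htr : (Mab ρ a b).trace = (t₁ * t₂) * σ.trace := by
    rw [key2, Matrix.trace_smul, smul_eq_mul]
  have hc : t₁ * t₂ ≠ 0 := by
    intro h; apply hobs; rw [htr, h, zero_mul]
  have hσtr : σ.trace ≠ 0 := by
    intro h; apply hobs; rw [htr, h, mul_zero]
  rw [key2, Matrix.trace_smul, smul_eq_mul, mul_inv, smul_smul]
  congr 1
  field_simp
  exact div_self hc


end
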